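/- Let H = H_{α,k} be any hyperplane and let γ be any combinatorial gallery in V. For every H-outcrop L of γ and every H-ingrowth L′ of γ, the galleries e_H^L(γ) and f_H^{L′}(γ) are combinatorial galleries with the same first face as γ and the same type as γ. -/

import Mathlib

open scoped RealInnerProductSpace
open scoped Classical

noncomputable section

/-- The ambient Euclidean space `V = ℝⁿ`. -/
abbrev V (n : ℕ) : Type := EuclideanSpace ℝ (Fin n)

/-- The data of an irreducible crystallographic (reduced) root system in `ℝⁿ`,
together with a choice of positive roots, simple roots and highest root. -/
structure RootData (n : ℕ) where
  Φ : Set (V n)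
  pos : Set (V n)
  simple : Fin n → V n
  highest : V n
  finite : Φ.Finite
  nonzero : ∀ α ∈ Φ, α ≠ 0
  neg_mem : ∀ α ∈ Φ, -α ∈ Φ
  span_top : Submodule.span ℝ Φ = ⊤
  reflect_mem : ∀ α ∈ Φ, ∀ β ∈ Φ, β - (2 * ⟪α, β⟫ / ⟪α, α⟫) • α ∈ Φ
  crystallographic : ∀ α ∈ Φ, ∀ β ∈ Φ, ∃ m : ℤ, 2 * ⟪α, β⟫ / ⟪α, α⟫ = (m : ℝ)
  reduced : ∀ α ∈ Φ, ∀ c : ℝ, c • α ∈ Φ → c = 1 ∨ c = -1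
  pos_sub : pos ⊆ Φ
  pos_total : ∀ α ∈ Φ, α ∈ pos ∨ -α ∈ pos
  pos_not_neg : ∀ α ∈ pos, -α ∉ pos
  simple_mem : ∀ i, simple i ∈ pos
  simple_indep : LinearIndependent ℝ simple
  pos_combo : ∀ α ∈ pos, ∃ c : Fin n → ℝ, (∀ i, 0 ≤ c i) ∧ α = ∑ i, c i • simple i
  highest_mem : highest ∈ pos
  highest_dominates : ∀ α ∈ pos, ∃ c : Fin n → ℝ, (∀ i, 0 ≤ c i) ∧
    highest - α = ∑ i, c i • simple i
  irreducible : ∀ A B : Set (Fin n), A ∪ B = Set.univ → A ∩ B = ∅ →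
    (∀ i ∈ A, ∀ j ∈ B, ⟪simple i, simple j⟫ = 0) → A = ∅ ∨ B = ∅

variable {n : ℕ}

/-- The coroot `α^∨ = 2α/⟨α,α⟩`. -/
def coroot (α : V n) : V n := (2 / ⟪α, α⟫) • α

/-- The affine hyperplane `H_{α,k} = {v : ⟨α,v⟩ = k}`. -/
def Hy (α : V n) (k : ℝ) : Set (V n) := {v | ⟪α, v⟫ = k}

/-- The closed half-space `{v : ⟨α,v⟩ ≥ k}`. -/
def Hge (α : V n) (k : ℝ) : Set (V n) := {v | k ≤ ⟪α, v⟫}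

/-- The closed half-space `{v : ⟨α,v⟩ ≤ k}`. -/
def Hle (α : V n) (k : ℝ) : Set (V n) := {v | ⟪α, v⟫ ≤ k}

/-- The affine reflection `s_{α,k}` fixing `H_{α,k}` pointwise. -/
def sRefl (α : V n) (k : ℝ) : V n → V n := fun v => v - (⟪α, v⟫ - k) • coroot α

/-- The coroot lattice `R^∨ = ⊕ᵢ ℤ αᵢ^∨`. -/
def corootLattice (D : RootData n) : Set (V n) :=
  {μ | ∃ c : Fin n → ℤ, μ = ∑ i, (c i : ℝ) • coroot (D.simple i)}

/-- The affine Weyl group `W`, as the group of permutations of `V` generated by all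
affine reflections `s_{α,k}` with `α ∈ Φ`, `k ∈ ℤ`. -/
def AffW (D : RootData n) : Subgroup (Equiv.Perm (V n)) :=
  Subgroup.closure {e : Equiv.Perm (V n) | ∃ α ∈ D.Φ, ∃ k : ℤ, ⇑e = sRefl α (k : ℝ)}

/-- The finite Weyl group `W₀`, generated by the linear reflections `s_{α,0}`. -/
def FinW (D : RootData n) : Subgroup (Equiv.Perm (V n)) :=
  Subgroup.closure {e : Equiv.Perm (V n) | ∃ α ∈ D.Φ, ⇑e = sRefl α 0}

/-- The Coxeter generating set `S = {s₀, s₁, …, sₙ}` of the affine Weyl group. -/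
def SGen (D : RootData n) : Set (AffW D) :=
  {s | ⇑(s : Equiv.Perm (V n)) = sRefl D.highest 1 ∨
       ∃ i : Fin n, ⇑(s : Equiv.Perm (V n)) = sRefl (D.simple i) 0}

/-- The Coxeter length of `y ∈ W` with respect to `S`. -/
def lenW (D : RootData n) (y : AffW D) : ℕ :=
  sInf {m | ∃ l : List (AffW D), (∀ s ∈ l, s ∈ SGen D) ∧ l.length = m ∧ l.prod = y}

/-- The fundamental alcove `𝐚_f`. -/
def fund (D : RootData n) : Set (V n) :=
  {v | (∀ i, 0 ≤ ⟪D.simple i, v⟫) ∧ ⟪D.highest, v⟫ ≤ 1}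

/-- The union of all the hyperplanes `H_{α,k}`. -/
def wallUnion (D : RootData n) : Set (V n) := ⋃ α ∈ D.Φ, ⋃ k : ℤ, Hy α (k : ℝ)

/-- An alcove: the closure of a connected component of the complement of all walls. -/
def IsAlcove (D : RootData n) (c : Set (V n)) : Prop :=
  ∃ v ∈ (wallUnion D)ᶜ, c = closure (connectedComponentIn (wallUnion D)ᶜ v)

/-- A (closed) face of the Coxeter complex: the closure of an equivalence class of points
having the same position relative to every hyperplane of the arrangement. -/
def IsFace (D : RootData n) (F : Set (V n)) : Prop :=
  ∃ v : V n, F = closure {w | ∀ α ∈ D.Φ, ∀ k : ℤ,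
    (⟪α, w⟫ = (k : ℝ) ↔ ⟪α, v⟫ = (k : ℝ)) ∧ (⟪α, w⟫ < (k : ℝ) ↔ ⟪α, v⟫ < (k : ℝ))}

/-- The set of all hyperplanes of the affine arrangement, as subsets of `V`. -/
def hyperplanes (D : RootData n) : Set (Set (V n)) :=
  {H | ∃ α ∈ D.Φ, ∃ k : ℤ, H = Hy α (k : ℝ)}

/-- `p` is a panel (codimension-one face) of the alcove `c`: it is the intersection of `c`
with a wall, and it lies in exactly one hyperplane (its supporting hyperplane). -/
def IsPanelOf (D : RootData n) (p c : Set (V n)) : Prop :=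
  IsAlcove D c ∧ IsFace D p ∧ (∃ H ∈ hyperplanes D, p = c ∩ H) ∧
    ∃! H, H ∈ hyperplanes D ∧ p ⊆ H

/-- The action of an element of the affine Weyl group on subsets of `V`. -/
def actW {D : RootData n} (x : AffW D) (A : Set (V n)) : Set (V n) :=
  ⇑(x : Equiv.Perm (V n)) '' A

/-- The data of a finite combinatorial gallery `(p₀, c₀, p₁, …, p_l, c_l, p_{l+1})`:
`len = l`, alcoves `c 0, …, c len` and faces `p 0, …, p (len+1)`. -/
structure PreGallery (n : ℕ) where
  len : ℕ
  p : ℕ → Set (V n)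
  c : ℕ → Set (V n)

/-- The gallery conditions for the data of a combinatorial gallery. -/
def IsGallery (D : RootData n) (γ : PreGallery n) : Prop :=
  (∀ i ≤ γ.len, IsAlcove D (γ.c i)) ∧
  (IsFace D (γ.p 0) ∧ γ.p 0 ⊆ γ.c 0) ∧
  (IsFace D (γ.p (γ.len + 1)) ∧ γ.p (γ.len + 1) ⊆ γ.c γ.len) ∧
  ∀ i, 1 ≤ i → i ≤ γ.len → IsPanelOf D (γ.p i) (γ.c (i - 1)) ∧ IsPanelOf D (γ.p i) (γ.c i)

/-- A gallery is positively folded with respect to an orientation `φ` if whenever it has a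
fold at `pᵢ` (i.e. `c_{i-1} = c_i`), `φ(cᵢ, pᵢ) = +`. -/
def PositivelyFolded (φ : Set (V n) → Set (V n) → Prop) (γ : PreGallery n) : Prop :=
  ∀ i, 1 ≤ i → i ≤ γ.len → γ.c (i - 1) = γ.c i → φ (γ.c i) (γ.p i)

/-- `X` and `Y` lie in a common closed half-space bounded by `H_{α,k}`. -/
def sameSide (α : V n) (k : ℝ) (X Y : Set (V n)) : Prop :=
  (X ⊆ Hge α k ∧ Y ⊆ Hge α k) ∨ (X ⊆ Hle α k ∧ Y ⊆ Hle α k)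

/-- The hyperplane `H_{α,k}` separates `X` from `Y` (they lie in opposite closed
half-spaces). -/
def Separates (α : V n) (k : ℝ) (X Y : Set (V n)) : Prop :=
  (X ⊆ Hge α k ∧ Y ⊆ Hle α k) ∨ (X ⊆ Hle α k ∧ Y ⊆ Hge α k)

/-- The orientation induced by an alcove `A`: `φ(c,p) = +` iff the closed half-space bounded
by the supporting hyperplane of `p` which contains `c` does not contain `A`. -/
def alcoveOrient (D : RootData n) (A : Set (V n)) : Set (V n) → Set (V n) → Prop :=
  fun c p => ∀ α ∈ D.Φ, ∀ k : ℤ, p ⊆ Hy α (k : ℝ) → ¬ sameSide α (k : ℝ) c A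

/-- Two faces have the same type iff they lie in the same orbit of the affine Weyl group. -/
def SameTypeFace (D : RootData n) (σ σ' : Set (V n)) : Prop :=
  ∃ x : Equiv.Perm (V n), x ∈ AffW D ∧ σ' = ⇑x '' σ

/-- Two galleries have the same type iff they have the same length and corresponding
faces (first face, panels, last face) have the same types. -/
def SameTypeGallery (D : RootData n) (γ γ' : PreGallery n) : Prop :=
  γ.len = γ'.len ∧ ∀ i ≤ γ.len + 1, SameTypeFace D (γ.p i) (γ'.p i)

/-- A gallery is minimal if it has minimal length among all galleries with the same first
and last faces. -/
def IsMinimal (D : RootData n) (γ : PreGallery n) : Prop :=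
  IsGallery D γ ∧ ∀ γ' : PreGallery n, IsGallery D γ' → γ'.p 0 = γ.p 0 →
    γ'.p (γ'.len + 1) = γ.p (γ.len + 1) → γ.len ≤ γ'.len

/-- The shadow with respect to the orientation `φ`, relative to a fixed (minimal) gallery
`γ`: the set of final simplices of all galleries of the same type as `γ`, with the same
first face, which are positively folded with respect to `φ`. -/
def Shadow (D : RootData n) (φ : Set (V n) → Set (V n) → Prop) (γ : PreGallery n) :
    Set (Set (V n)) :=
  {ζ | ∃ γ' : PreGallery n, IsGallery D γ' ∧ SameTypeGallery D γ γ' ∧ γ'.p 0 = γ.p 0 ∧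
    PositivelyFolded φ γ' ∧ ζ = γ'.p (γ'.len + 1)}

/-- The vertex version of the shadow: the set of points `μ` whose corresponding vertex
(the singleton face `{μ}`) is a final simplex of a positively folded gallery of the
appropriate type. -/
def VShadow (D : RootData n) (φ : Set (V n) → Set (V n) → Prop) (γ : PreGallery n) :
    Set (V n) :=
  {μ | ({μ} : Set (V n)) ∈ Shadow D φ γ}

/-- The orbit `W₀ · λ` of a point under the finite Weyl group. -/
def W0orbit (D : RootData n) (lam : V n) : Set (V n) :=
  {v | ∃ w ∈ FinW D, v = w lam}

/-- The closed half-space bounded by `H_{α,k}` which contains the fundamental alcove. -/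
def HalfId (D : RootData n) (α : V n) (k : ℝ) : Set (V n) :=
  if fund D ⊆ Hge α k then Hge α k else Hle α k

/-- `[j,m]` is a (finite) `H_{α,k}`-protrusion of `γ`. -/
def IsProtrusionFin (D : RootData n) (γ : PreGallery n) (α : V n) (k : ℝ) (j m : ℕ) : Prop :=
  j < m ∧ m ≤ γ.len + 1 ∧ γ.p j ⊆ Hy α k ∧ γ.p m ⊆ Hy α k ∧
    ∀ i, j ≤ i → i < m → ¬ γ.c i ⊆ HalfId D α k

/-- `[j,∞)` is an (infinite) `H_{α,k}`-protrusion of `γ`. -/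
def IsProtrusionInf (D : RootData n) (γ : PreGallery n) (α : V n) (k : ℝ) (j : ℕ) : Prop :=
  j ≤ γ.len + 1 ∧ γ.p j ⊆ Hy α k ∧ ∀ i, j ≤ i → i ≤ γ.len → ¬ γ.c i ⊆ HalfId D α k

/-- The set of indices reflected by the maximal `H`-outcrop: the union of (the index sets
of) all `H`-protrusions. -/
def maxOutcrop (D : RootData n) (γ : PreGallery n) (α : V n) (k : ℝ) : Set ℕ :=
  {i | (∃ j m, IsProtrusionFin D γ α k j m ∧ j ≤ i ∧ i < m) ∨
       (∃ j, IsProtrusionInf D γ α k j ∧ j ≤ i)}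

/-- `[j,m]` is a (finite) `H_{α,k}`-indentation of `γ`. -/
def IsIndentationFin (D : RootData n) (γ : PreGallery n) (α : V n) (k : ℝ) (j m : ℕ) : Prop :=
  1 ≤ j ∧ j < m ∧ m ≤ γ.len + 1 ∧ γ.p j ⊆ Hy α k ∧ γ.p m ⊆ Hy α k ∧
    ∀ i, j ≤ i → i < m → γ.c i ⊆ HalfId D α k

/-- `[j,∞)` is an (infinite) `H_{α,k}`-indentation of `γ`. -/
def IsIndentationInf (D : RootData n) (γ : PreGallery n) (α : V n) (k : ℝ) (j : ℕ) : Prop :=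
  1 ≤ j ∧ j ≤ γ.len + 1 ∧ γ.p j ⊆ Hy α k ∧ ∀ i, j ≤ i → i ≤ γ.len → γ.c i ⊆ HalfId D α k

/-- The set of indices reflected by the maximal `H`-ingrowth: the union of (the index sets
of) all `H`-indentations. -/
def maxIngrowth (D : RootData n) (γ : PreGallery n) (α : V n) (k : ℝ) : Set ℕ :=
  {i | (∃ j m, IsIndentationFin D γ α k j m ∧ j ≤ i ∧ i < m) ∨
       (∃ j, IsIndentationInf D γ α k j ∧ j ≤ i)}

/-- The operators `e_H^L` and `f_H^L`: reflect in `H_{α,k}` those alcoves (and the faces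
in between) whose indices belong to `L`.  (Since the bounding faces of a protrusion or
indentation lie in `H`, they are fixed pointwise by the reflection, so this uniform
description agrees with the usual one.) -/
def flipGallery (α : V n) (k : ℝ) (L : Set ℕ) (γ : PreGallery n) : PreGallery n :=
  ⟨γ.len,
   fun i => if i ∈ L then sRefl α k '' γ.p i else γ.p i,
   fun i => if i ∈ L then sRefl α k '' γ.c i else γ.c i⟩

/-- `P` is the index set of a single `H`-protrusion. -/
def IsFlipProtrusion (D : RootData n) (γ : PreGallery n) (α : V n) (k : ℝ) (P : Set ℕ) :
    Prop :=
  (∃ j m, IsProtrusionFin D γ α k j m ∧ P = Set.Ico j m) ∨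
  (∃ j, IsProtrusionInf D γ α k j ∧ P = Set.Ici j)

/-- `P` is the index set of a single `H`-indentation. -/
def IsFlipIndentation (D : RootData n) (γ : PreGallery n) (α : V n) (k : ℝ) (P : Set ℕ) :
    Prop :=
  (∃ j m, IsIndentationFin D γ α k j m ∧ P = Set.Ico j m) ∨
  (∃ j, IsIndentationInf D γ α k j ∧ P = Set.Ici j)

/-- `L` is an `H`-outcrop: a disjoint union of `H`-protrusions. -/
def IsOutcrop (D : RootData n) (γ : PreGallery n) (α : V n) (k : ℝ) (L : Set ℕ) : Prop :=
  ∃ C : Set (Set ℕ), (∀ P ∈ C, IsFlipProtrusion D γ α k P) ∧ C.Pairwise Disjoint ∧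
    L = ⋃₀ C

/-- `L` is an `H`-ingrowth: a disjoint union of `H`-indentations. -/
def IsIngrowth (D : RootData n) (γ : PreGallery n) (α : V n) (k : ℝ) (L : Set ℕ) : Prop :=
  ∃ C : Set (Set ℕ), (∀ P ∈ C, IsFlipIndentation D γ α k P) ∧ C.Pairwise Disjoint ∧
    L = ⋃₀ C

/-- The dominant Weyl chamber `C_f`. -/
def Cf (D : RootData n) : Set (V n) := {v | ∀ α ∈ D.pos, 0 ≤ ⟪α, v⟫}

/-- The closed half-space `α^{k,w}` bounded by `H_{α,k}` which contains a subsector of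
the Weyl chamber `w·C_f`. -/
def halfFor (D : RootData n) (α : V n) (k : ℝ) (w : Equiv.Perm (V n)) : Set (V n) :=
  if ∀ v ∈ Cf D, 0 ≤ ⟪α, w v⟫ then Hge α k else Hle α k

/-- The sub-root system `Φ_J` spanned by the simple roots indexed by `J`. -/
def PhiJ (D : RootData n) (J : Set (Fin n)) : Set (V n) :=
  {α | α ∈ D.Φ ∧ α ∈ Submodule.span ℝ (D.simple '' J)}

/-- The positive roots `Φ_J⁺` of the sub-root system `Φ_J`. -/
def PhiJpos (D : RootData n) (J : Set (Fin n)) : Set (V n) := D.pos ∩ PhiJ D J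

/-- `w0` is the longest element of the finite Weyl group: it maps the dominant Weyl chamber
to the antidominant one. -/
def IsLongest (D : RootData n) (w0 : Equiv.Perm (V n)) : Prop :=
  w0 ∈ FinW D ∧ ⇑w0 '' Cf D = {v | -v ∈ Cf D}

/-- The `J`-chimney `ξ_J`, a collection of closed half-spaces. -/
def chimney (D : RootData n) (J : Set (Fin n)) (w0 : Equiv.Perm (V n)) : Set (Set (V n)) :=
  {h | ∃ α ∈ PhiJpos D J, ∃ k : ℤ, k ≤ 0 ∧ h = halfFor D α (k : ℝ) 1} ∪
  {h | ∃ α ∈ PhiJpos D J, ∃ k : ℤ, 1 ≤ k ∧ h = halfFor D α (k : ℝ) w0} ∪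
  {h | ∃ β ∈ D.pos \ PhiJpos D J, ∃ k : ℤ, h = halfFor D β (k : ℝ) w0}

/-- The `(J,y)`-chimney `ξ_{J,y} = y · ξ_J`. -/
def chimneyY (D : RootData n) (J : Set (Fin n)) (w0 : Equiv.Perm (V n)) (y : AffW D) :
    Set (Set (V n)) :=
  {h | ∃ h' ∈ chimney D J w0, h = actW y h'}

/-- The orientation `φ_{J,y}` induced by the `(J,y)`-chimney: `φ(c,p) = +` iff the closed
half-space bounded by the supporting hyperplane of `p` which contains `c` is not an
element of `ξ_{J,y}`. -/
def chimneyOrient (D : RootData n) (J : Set (Fin n)) (w0 : Equiv.Perm (V n)) (y : AffW D) :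
    Set (V n) → Set (V n) → Prop :=
  fun c p => ∀ α ∈ D.Φ, ∀ k : ℤ, p ⊆ Hy α (k : ℝ) →
    ¬ ((c ⊆ Hge α (k : ℝ) ∧ Hge α (k : ℝ) ∈ chimneyY D J w0 y) ∨
       (c ⊆ Hle α (k : ℝ) ∧ Hle α (k : ℝ) ∈ chimneyY D J w0 y))

/-- The `J`-sector determined by integers `n_β`, `β ∈ Φ⁺ ∖ Φ_J⁺`. -/
def sectorJ (D : RootData n) (J : Set (Fin n)) (w0 : Equiv.Perm (V n)) (nb : V n → ℤ) :
    Set (V n) :=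
  (⋂ α ∈ PhiJpos D J, halfFor D α 0 1 ∩ halfFor D α 1 w0) ∩
  ⋂ β ∈ D.pos \ PhiJpos D J, halfFor D β (nb β : ℝ) w0

/-- The `(J,y)`-sector `y · S_J({n_β})`. -/
def sectorJY (D : RootData n) (J : Set (Fin n)) (w0 : Equiv.Perm (V n)) (y : AffW D)
    (nb : V n → ℤ) : Set (V n) :=
  actW y (sectorJ D J w0 nb)

/-- The data of an infinite combinatorial gallery `(p₀, c₀, p₁, c₁, …)`. -/
structure InfPreGallery (n : ℕ) where
  p : ℕ → Set (V n)
  c : ℕ → Set (V n)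

/-- The gallery conditions for an infinite combinatorial gallery. -/
def IsInfGallery (D : RootData n) (Γ : InfPreGallery n) : Prop :=
  (∀ i, IsAlcove D (Γ.c i)) ∧ IsFace D (Γ.p 0) ∧ Γ.p 0 ⊆ Γ.c 0 ∧
    ∀ i, 1 ≤ i → IsPanelOf D (Γ.p i) (Γ.c (i - 1)) ∧ IsPanelOf D (Γ.p i) (Γ.c i)

/-- The initial finite subgallery `(p₀, c₀, …, p_{m+1})` of an infinite gallery. -/
def truncGallery (Γ : InfPreGallery n) (m : ℕ) : PreGallery n := ⟨m, Γ.p, Γ.c⟩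

/-- An infinite gallery is minimal if every initial finite subgallery is minimal. -/
def InfMinimal (D : RootData n) (Γ : InfPreGallery n) : Prop :=
  ∀ m : ℕ, IsMinimal D (truncGallery Γ m)

/-- Regularity of a (minimal infinite) gallery with respect to the `(J,y)`-sector, where
`y = t^μ u`. -/
def RegularWrt (D : RootData n) (J : Set (Fin n)) (w0 u : Equiv.Perm (V n)) (μ : V n)
    (nb : V n → ℤ) (Γ : InfPreGallery n) : Prop :=
  ∀ β ∈ D.pos \ PhiJpos D J, ∀ k : ℤ,
    halfFor D (u β) (k : ℝ) (u * w0) ⊆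
      halfFor D (u β) ((nb β : ℝ) + ⟪u β, μ⟫) (u * w0) →
    ∃ i, Γ.c i ⊆ halfFor D (u β) (k : ℝ) (u * w0)

/-- The panel of the fundamental alcove fixed by the generator `s ∈ S` (determining the
type of a panel). -/
def fixedPanelType {D : RootData n} (s : AffW D) : Set (V n) :=
  fund D ∩ {v | (s : Equiv.Perm (V n)) v = v}

/-- `γ` has type `(type(σ0), s_{j₁}, …, s_{j_l}, type(τ))` where the `s_{jᵢ}` are the
entries of the word `l`. -/
def HasWordType (D : RootData n) (γ : PreGallery n) (σ0 : Set (V n)) (l : List (AffW D))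
    (τ : Set (V n)) : Prop :=
  γ.len = l.length ∧ SameTypeFace D σ0 (γ.p 0) ∧ SameTypeFace D τ (γ.p (γ.len + 1)) ∧
    ∀ i, ∀ h : i < l.length, SameTypeFace D (fixedPanelType (l.get ⟨i, h⟩)) (γ.p (i + 1))

/-- `l` is a reduced word for `w ∈ W`. -/
def IsReducedWord (D : RootData n) (l : List (AffW D)) (w : AffW D) : Prop :=
  (∀ s ∈ l, s ∈ SGen D) ∧ l.prod = w ∧ l.length = lenW D w

end

/-!
Since `α ∈ Φ` and `k ∈ ℤ`, the reflection `s_{α,k}` maps every hyperplane `H_{β,m}` of the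
arrangement onto another one, so it maps alcoves, faces and panels to alcoves, faces and panels,
and it lies in `W`, so it preserves types. A flipped gallery reflects blocks of consecutive
alcoves together with the panels inside each block; a panel at which a block starts or stops
lies in `H`, so the reflection fixes it and it is still a panel of both of its neighbours.
-/

section FlipGallery

variable {n : ℕ} {α : V n} {k : ℝ}

lemma inner_coroot_self (hα : α ≠ 0) : ⟪α, coroot α⟫ = 2 := by
  rw [coroot, real_inner_smul_right]
  exact div_mul_cancel₀ 2 (inner_self_ne_zero.mpr hα)

lemma sRefl_involutive (hα : α ≠ 0) (k : ℝ) : Function.Involutive (sRefl α k) := by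
  intro v
  simp only [sRefl, inner_sub_right, real_inner_smul_right, inner_coroot_self hα, sub_sub,
    ← add_smul]
  exact sub_eq_self.mpr (smul_eq_zero_of_left (by ring) _)

lemma image_sRefl_of_subset_Hy {X : Set (V n)} (hX : X ⊆ Hy α k) : sRefl α k '' X = X :=
  Set.EqOn.image_eq_self fun v hv => by
    have hv : ⟪α, v⟫ = k := hX hv
    simp [sRefl, hv]

lemma mem_image_sRefl_iff (hα : α ≠ 0) {A : Set (V n)} {v : V n} :
    v ∈ sRefl α k '' A ↔ sRefl α k v ∈ A :=
  Set.mem_image_iff_of_inverse (sRefl_involutive hα k).leftInverse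
    (sRefl_involutive hα k).rightInverse

lemma continuous_sRefl (α : V n) (k : ℝ) : Continuous (sRefl α k) := by
  unfold sRefl; fun_prop

noncomputable def sReflHomeomorph (hα : α ≠ 0) (k : ℝ) : V n ≃ₜ V n where
  toEquiv := (sRefl_involutive hα k).toPerm _
  continuous_toFun := continuous_sRefl α k
  continuous_invFun := continuous_sRefl α k

lemma inner_sRefl (α : V n) (k : ℝ) (β v : V n) :
    ⟪β, sRefl α k v⟫ = ⟪β - (2 * ⟪α, β⟫ / ⟪α, α⟫) • α, v⟫ + 2 * ⟪α, β⟫ / ⟪α, α⟫ * k := by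
  simp only [sRefl, coroot, inner_sub_right, inner_sub_left, real_inner_smul_right,
    real_inner_smul_left, real_inner_comm β α]
  ring

variable (D : RootData n)

lemma exists_inner_sRefl_sub_eq (hα : α ∈ D.Φ) (k : ℤ) {β : V n} (hβ : β ∈ D.Φ) (m : ℤ) :
    ∃ β' ∈ D.Φ, ∃ m' : ℤ, ∀ v, ⟪β, sRefl α k v⟫ - m = ⟪β', v⟫ - m' := by
  obtain ⟨c, hc⟩ := D.crystallographic α hα β hβ
  refine ⟨β - (c : ℝ) • α, hc ▸ D.reflect_mem α hα β hβ, m - c * k, fun v => ?_⟩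
  rw [inner_sRefl, hc]
  push_cast
  ring

/-- Faces (`IsFace`) are the closures of the classes of this relation. -/
def SameCell (w v : V n) : Prop :=
  ∀ β ∈ D.Φ, ∀ m : ℤ, (⟪β, w⟫ = m ↔ ⟪β, v⟫ = m) ∧ (⟪β, w⟫ < m ↔ ⟪β, v⟫ < m)

variable {D}

lemma SameCell.sRefl_swap (hα : α ∈ D.Φ) (k : ℤ) {w v : V n}
    (h : SameCell D (sRefl α k w) v) : SameCell D w (sRefl α k v) := by
  intro β hβ m
  obtain ⟨β', hβ', m', hβ'm'⟩ := exists_inner_sRefl_sub_eq D hα k hβ m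
  have hw := hβ'm' (sRefl α k w)
  rw [sRefl_involutive (D.nonzero α hα) (k : ℝ) w] at hw
  rw [← sub_eq_zero, hw, sub_eq_zero, ← sub_eq_zero (a := ⟪β, sRefl α k v⟫), hβ'm',
    sub_eq_zero, ← sub_neg, hw, sub_neg, ← sub_neg (a := ⟪β, sRefl α k v⟫), hβ'm', sub_neg]
  exact h β' hβ' m'

lemma sameCell_sRefl_iff (hα : α ∈ D.Φ) (k : ℤ) {w v : V n} :
    SameCell D (sRefl α k w) v ↔ SameCell D w (sRefl α k v) := by
  have hinv := sRefl_involutive (D.nonzero α hα) (k : ℝ)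
  refine ⟨SameCell.sRefl_swap hα k, fun h => ?_⟩
  have h' := SameCell.sRefl_swap hα k (w := sRefl α k w) (v := sRefl α k v) (by rwa [hinv w])
  rwa [hinv v] at h'

lemma isFace_image_sRefl (hα : α ∈ D.Φ) (k : ℤ) {F : Set (V n)} (hF : IsFace D F) :
    IsFace D (sRefl α k '' F) := by
  obtain ⟨v, rfl⟩ := hF
  refine ⟨sRefl α k v, ?_⟩
  have hcell : sRefl α k '' {w | SameCell D w v} = {w | SameCell D w (sRefl α k v)} := by
    ext w
    exact (mem_image_sRefl_iff (D.nonzero α hα)).trans (sameCell_sRefl_iff hα k)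
  exact ((sReflHomeomorph (D.nonzero α hα) k).image_closure _).trans (congrArg closure hcell)

lemma image_sRefl_Hy (hα : α ∈ D.Φ) (k : ℤ) {β : V n} (hβ : β ∈ D.Φ) (m : ℤ) :
    ∃ β' ∈ D.Φ, ∃ m' : ℤ, sRefl α k '' Hy β m = Hy β' m' := by
  obtain ⟨β', hβ', m', hβ'm'⟩ := exists_inner_sRefl_sub_eq D hα k hβ m
  refine ⟨β', hβ', m', Set.ext fun v => ?_⟩
  rw [mem_image_sRefl_iff (D.nonzero α hα)]
  show ⟪β, sRefl α k v⟫ = m ↔ ⟪β', v⟫ = m'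
  rw [← sub_eq_zero, hβ'm', sub_eq_zero]

lemma image_sRefl_mem_hyperplanes (hα : α ∈ D.Φ) (k : ℤ) {H : Set (V n)}
    (hH : H ∈ hyperplanes D) : sRefl α k '' H ∈ hyperplanes D := by
  obtain ⟨β, hβ, m, rfl⟩ := hH
  exact image_sRefl_Hy hα k hβ m

lemma sRefl_mem_wallUnion (hα : α ∈ D.Φ) (k : ℤ) {v : V n} (hv : v ∈ wallUnion D) :
    sRefl α k v ∈ wallUnion D := by
  simp only [wallUnion, Set.mem_iUnion] at hv ⊢
  obtain ⟨β, hβ, m, hvm⟩ := hv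
  obtain ⟨β', hβ', m', hH⟩ := image_sRefl_Hy hα k hβ m
  exact ⟨β', hβ', m', hH ▸ Set.mem_image_of_mem _ hvm⟩

lemma image_sRefl_compl_wallUnion (hα : α ∈ D.Φ) (k : ℤ) :
    sRefl α k '' (wallUnion D)ᶜ = (wallUnion D)ᶜ := by
  have hinv := sRefl_involutive (D.nonzero α hα) (k : ℝ)
  ext v
  rw [mem_image_sRefl_iff (D.nonzero α hα), Set.mem_compl_iff, Set.mem_compl_iff, not_iff_not]
  exact ⟨fun h => hinv v ▸ sRefl_mem_wallUnion hα k h, sRefl_mem_wallUnion hα k⟩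

lemma isAlcove_image_sRefl (hα : α ∈ D.Φ) (k : ℤ) {c : Set (V n)} (hc : IsAlcove D c) :
    IsAlcove D (sRefl α k '' c) := by
  obtain ⟨v, hv, rfl⟩ := hc
  have hcompl := image_sRefl_compl_wallUnion hα k
  let e := sReflHomeomorph (D.nonzero α hα) (k : ℝ)
  refine ⟨sRefl α k v, hcompl ▸ Set.mem_image_of_mem _ hv, ?_⟩
  have hcc := e.image_connectedComponentIn hv
  rw [show ⇑e = sRefl α k from rfl, hcompl] at hcc
  exact (e.image_closure _).trans (congrArg closure hcc)

lemma isPanelOf_image_sRefl (hα : α ∈ D.Φ) (k : ℤ) {p c : Set (V n)} (h : IsPanelOf D p c) :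
    IsPanelOf D (sRefl α k '' p) (sRefl α k '' c) := by
  have hinv := sRefl_involutive (D.nonzero α hα) (k : ℝ)
  obtain ⟨hc, hp, ⟨H, hH, rfl⟩, H₀, ⟨hH₀, hpH₀⟩, huniq⟩ := h
  refine ⟨isAlcove_image_sRefl hα k hc, isFace_image_sRefl hα k hp,
    ⟨_, image_sRefl_mem_hyperplanes hα k hH, Set.image_inter hinv.injective⟩,
    _, ⟨image_sRefl_mem_hyperplanes hα k hH₀, Set.image_mono hpH₀⟩, ?_⟩
  rintro H' ⟨hH', hpH'⟩
  have hH'₀ : sRefl α k '' H' = H₀ := huniq _ ⟨image_sRefl_mem_hyperplanes hα k hH', fun v hv =>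
    (mem_image_sRefl_iff (D.nonzero α hα)).mpr (hpH' (Set.mem_image_of_mem _ hv))⟩
  rw [← hH'₀, Set.image_image, funext hinv, Set.image_id']

lemma sameTypeFace_refl (σ : Set (V n)) : SameTypeFace D σ σ :=
  ⟨1, one_mem _, (Set.image_id σ).symm⟩

lemma sameTypeFace_image_sRefl (hα : α ∈ D.Φ) (k : ℤ) (σ : Set (V n)) :
    SameTypeFace D σ (sRefl α k '' σ) :=
  ⟨(sRefl_involutive (D.nonzero α hα) k).toPerm _, Subgroup.subset_closure ⟨α, hα, k, rfl⟩, rfl⟩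

/-- The faces of `γ` at which the index set `L` of reflected alcoves starts or stops lie in `H`. -/
def BoundaryFacesIn (γ : PreGallery n) (H : Set (V n)) (L : Set ℕ) : Prop :=
  (0 ∈ L → γ.p 0 ⊆ H) ∧ ∀ i, (i + 1 ∈ L ↔ i ∈ L) ∨ γ.p (i + 1) ⊆ H

section BoundaryFacesIn

variable {γ : PreGallery n} {H : Set (V n)}

lemma boundaryFacesIn_Ico {j m : ℕ} (hj : γ.p j ⊆ H) (hm : γ.p m ⊆ H) :
    BoundaryFacesIn γ H (Set.Ico j m) := by
  refine ⟨fun h0 => ?_, fun i => ?_⟩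
  · obtain rfl : j = 0 := Nat.eq_zero_of_le_zero h0.1
    exact hj
  · by_cases hij : i + 1 = j
    · exact .inr (hij ▸ hj)
    by_cases him : i + 1 = m
    · exact .inr (him ▸ hm)
    left
    simp only [Set.mem_Ico]
    omega

lemma boundaryFacesIn_Ici {j : ℕ} (hj : γ.p j ⊆ H) : BoundaryFacesIn γ H (Set.Ici j) := by
  refine ⟨fun h0 => ?_, fun i => ?_⟩
  · obtain rfl : j = 0 := Nat.eq_zero_of_le_zero h0
    exact hj
  · by_cases hij : i + 1 = j
    · exact .inr (hij ▸ hj)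
    left
    simp only [Set.mem_Ici]
    omega

lemma boundaryFacesIn_sUnion {C : Set (Set ℕ)} (h : ∀ P ∈ C, BoundaryFacesIn γ H P) :
    BoundaryFacesIn γ H (⋃₀ C) := by
  refine ⟨fun ⟨P, hP, h0⟩ => (h P hP).1 h0, fun i => ?_⟩
  by_cases hstop : ∃ P ∈ C, ¬(i + 1 ∈ P ↔ i ∈ P)
  · obtain ⟨P, hP, hPi⟩ := hstop
    exact .inr (((h P hP).2 i).resolve_left hPi)
  · push Not at hstop
    exact .inl ⟨fun ⟨P, hP, hi⟩ => ⟨P, hP, (hstop P hP).mp hi⟩,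
      fun ⟨P, hP, hi⟩ => ⟨P, hP, (hstop P hP).mpr hi⟩⟩

end BoundaryFacesIn

variable {γ : PreGallery n} {P L : Set ℕ}

lemma IsFlipProtrusion.boundaryFacesIn (h : IsFlipProtrusion D γ α k P) :
    BoundaryFacesIn γ (Hy α k) P := by
  rcases h with ⟨j, m, ⟨-, -, hj, hm, -⟩, rfl⟩ | ⟨j, ⟨-, hj, -⟩, rfl⟩
  exacts [boundaryFacesIn_Ico hj hm, boundaryFacesIn_Ici hj]

lemma IsFlipIndentation.boundaryFacesIn (h : IsFlipIndentation D γ α k P) :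
    BoundaryFacesIn γ (Hy α k) P := by
  rcases h with ⟨j, m, ⟨-, -, -, hj, hm, -⟩, rfl⟩ | ⟨j, ⟨-, -, hj, -⟩, rfl⟩
  exacts [boundaryFacesIn_Ico hj hm, boundaryFacesIn_Ici hj]

lemma IsOutcrop.boundaryFacesIn (h : IsOutcrop D γ α k L) : BoundaryFacesIn γ (Hy α k) L := by
  obtain ⟨C, hC, -, rfl⟩ := h
  exact boundaryFacesIn_sUnion fun P hP => (hC P hP).boundaryFacesIn

lemma IsIngrowth.boundaryFacesIn (h : IsIngrowth D γ α k L) : BoundaryFacesIn γ (Hy α k) L := by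
  obtain ⟨C, hC, -, rfl⟩ := h
  exact boundaryFacesIn_sUnion fun P hP => (hC P hP).boundaryFacesIn

lemma flipGallery_p_zero (hL : BoundaryFacesIn γ (Hy α k) L) :
    (flipGallery α k L γ).p 0 = γ.p 0 := by
  show (if 0 ∈ L then _ else _) = _
  split_ifs with h0
  exacts [image_sRefl_of_subset_Hy (hL.1 h0), rfl]

/-- A panel where `L` starts or stops is fixed by the reflection, so it may be regarded as
reflected together with the alcove before it. -/
lemma flipGallery_p_succ (hL : BoundaryFacesIn γ (Hy α k) L) (i : ℕ) :
    (flipGallery α k L γ).p (i + 1) =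
      if i ∈ L then sRefl α k '' γ.p (i + 1) else γ.p (i + 1) := by
  show (if i + 1 ∈ L then _ else _) = _
  rcases hL.2 i with hiff | hH
  · simp only [hiff]
  · simp only [image_sRefl_of_subset_Hy hH, ite_self]

lemma isPanelOf_ite_image_sRefl (hα : α ∈ D.Φ) (k : ℤ) (b : Prop) [Decidable b]
    {p c : Set (V n)} (h : IsPanelOf D p c) :
    IsPanelOf D (if b then sRefl α k '' p else p) (if b then sRefl α k '' c else c) := by
  split_ifs
  exacts [isPanelOf_image_sRefl hα k h, h]

lemma isGallery_flipGallery (hα : α ∈ D.Φ) (k : ℤ) (hγ : IsGallery D γ)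
    (hL : BoundaryFacesIn γ (Hy α k) L) : IsGallery D (flipGallery α k L γ) := by
  obtain ⟨hc, ⟨hface₀, hsub₀⟩, ⟨hfaceₗ, hsubₗ⟩, hpanel⟩ := hγ
  refine ⟨fun i hi => ?_, ⟨?_, ?_⟩, ?_, fun i hi₁ hi => ?_⟩
  · show IsAlcove D (if i ∈ L then _ else _)
    split_ifs
    exacts [isAlcove_image_sRefl hα k (hc i hi), hc i hi]
  · exact (flipGallery_p_zero hL).symm ▸ hface₀
  · show (if 0 ∈ L then _ else _ : Set (V n)) ⊆ if 0 ∈ L then _ else _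
    split_ifs
    exacts [Set.image_mono hsub₀, hsub₀]
  · show IsFace D ((flipGallery α k L γ).p (γ.len + 1)) ∧
      (flipGallery α k L γ).p (γ.len + 1) ⊆ if γ.len ∈ L then _ else _
    rw [flipGallery_p_succ hL]
    split_ifs
    exacts [⟨isFace_image_sRefl hα k hfaceₗ, Set.image_mono hsubₗ⟩, ⟨hfaceₗ, hsubₗ⟩]
  · obtain ⟨i, rfl⟩ : ∃ j, i = j + 1 := ⟨i - 1, by omega⟩
    obtain ⟨hprev, hnext⟩ := hpanel (i + 1) hi₁ hi
    rw [Nat.add_sub_cancel] at hprev ⊢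
    refine ⟨?_, isPanelOf_ite_image_sRefl hα k _ hnext⟩
    rw [flipGallery_p_succ hL]
    exact isPanelOf_ite_image_sRefl hα k _ hprev

lemma sameTypeGallery_flipGallery (hα : α ∈ D.Φ) (k : ℤ) (L : Set ℕ) (γ : PreGallery n) :
    SameTypeGallery D γ (flipGallery α k L γ) := by
  refine ⟨rfl, fun i _ => ?_⟩
  show SameTypeFace D _ (if i ∈ L then _ else _)
  split_ifs
  exacts [sameTypeFace_image_sRefl hα k _, sameTypeFace_refl _]

end FlipGallery

/-- Remarks: for any `H`-outcrop `L` and `H`-ingrowth `L'`, the galleries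
`e_H^L(γ)` and `f_H^{L'}(γ)` are combinatorial galleries with the same first face and the
same type as `γ`. -/
theorem flip_isGallery_sameType {n : ℕ} (D : RootData n)
    (α : V n) (hα : α ∈ D.Φ) (k : ℤ)
    (γ : PreGallery n) (hγ : IsGallery D γ)
    (L L' : Set ℕ) (hL : IsOutcrop D γ α (k : ℝ) L) (hL' : IsIngrowth D γ α (k : ℝ) L') :
    (IsGallery D (flipGallery α (k : ℝ) L γ) ∧
      (flipGallery α (k : ℝ) L γ).p 0 = γ.p 0 ∧
      SameTypeGallery D γ (flipGallery α (k : ℝ) L γ)) ∧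
    (IsGallery D (flipGallery α (k : ℝ) L' γ) ∧
      (flipGallery α (k : ℝ) L' γ).p 0 = γ.p 0 ∧
      SameTypeGallery D γ (flipGallery α (k : ℝ) L' γ)) :=
  ⟨⟨isGallery_flipGallery hα k hγ hL.boundaryFacesIn, flipGallery_p_zero hL.boundaryFacesIn,
      sameTypeGallery_flipGallery hα k L γ⟩,
    ⟨isGallery_flipGallery hα k hγ hL'.boundaryFacesIn, flipGallery_p_zero hL'.boundaryFacesIn,
      sameTypeGallery_flipGallery hα k L' γ⟩⟩
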